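/- Let C = {c_1, …, c_m} be a set of clauses over boolean variables x_1, …, x_n, where each clause is a set of literals containing no variable together with its negation. Define the semi-automaton A = ({a,b,c}, Q, δ) with Q = { q_{i,j} : 1 ≤ i ≤ m, 1 ≤ j ≤ n+1 } ∪ {q_f} and transitions: for 1 ≤ i ≤ m and 1 ≤ j ≤ n, δ(q_{i,j}, b) = q_f if ¬x_j ∈ c_i and δ(q_{i,j}, b) = q_{i,j+1} otherwise; δ(q_{i,j}, c) = q_f if x_j ∈ c_i and δ(q_{i,j}, c) = q_{i,j+1} otherwise; δ(q_{i,1}, a) = q_{i,1} and δ(q_{i,j}, a) = q_f for 2 ≤ j ≤ n+1; δ(q_{i,n+1}, b) = δ(q_{i,n+1}, c) = q_{i,n+1}; and q_f is a sink state. Then A is weakly acyclic, and A has a synchronizing word in the language a(b+c)* (a word beginning with a followed by letters from {b,c}) if and only if there is a truth assignment to x_1, …, x_n satisfying every clause of C. -/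

import Mathlib

/-- A three-letter alphabet `{a, b, c}`. -/
inductive ABC : Type
  | a | b | c
  deriving DecidableEq

instance : Fintype ABC :=
  ⟨{ABC.a, ABC.b, ABC.c}, fun x => by cases x <;> simp⟩

/-- The transition function extended to words: `δ*(q, u)`. -/
def deltaStar {Q A : Type*} (δ : Q → A → Q) (q : Q) (u : List A) : Q :=
  u.foldl δ q

/-- A complete deterministic semi-automaton is weakly acyclic if all simple
cycles are self-loops. -/
def WeaklyAcyclic {Q A : Type*} (δ : Q → A → Q) : Prop :=
  ∀ (q : Q) (u : List A), u ≠ [] → deltaStar δ q u = q → ∀ x ∈ u, δ q x = q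

/-- The SAT reduction automaton for the constraint language `a(b+c)*`.

Clauses are encoded by `C : Fin m → Fin n → Option Bool`, where
`C i j = some true` means the literal `x_{j+1}` occurs in clause `c_{i+1}`,
`C i j = some false` means `¬x_{j+1}` occurs in it, and `C i j = none` means
neither occurs (so no clause contains a variable together with its negation).

States are `Option (Fin m × Fin (n+1))`, where `some (i, j)` encodes the state
`q_{i+1, j+1}` (so the second index ranges over `1, …, n+1` as in the paper)
and `none` encodes the sink state `q_f`.

Transitions: for `1 ≤ j ≤ n`, `δ(q_{i,j}, b) = q_f` if `¬x_j ∈ c_i` and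
`q_{i,j+1}` otherwise; `δ(q_{i,j}, c) = q_f` if `x_j ∈ c_i` and `q_{i,j+1}`
otherwise; `δ(q_{i,1}, a) = q_{i,1}` and `δ(q_{i,j}, a) = q_f` for `j ≥ 2`;
`q_{i,n+1}` is fixed by `b` and `c`; `q_f` is a sink state. -/
def satDelta {m n : ℕ} (C : Fin m → Fin n → Option Bool) :
    Option (Fin m × Fin (n + 1)) → ABC → Option (Fin m × Fin (n + 1))
  | none, _ => none
  | some (i, j), ABC.a => if j.val = 0 then some (i, j) else none
  | some (i, j), ABC.b =>
      if h : j.val < n then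
        if C i ⟨j.val, h⟩ = some false then none
        else some (i, ⟨j.val + 1, by omega⟩)
      else some (i, j)
  | some (i, j), ABC.c =>
      if h : j.val < n then
        if C i ⟨j.val, h⟩ = some true then none
        else some (i, ⟨j.val + 1, by omega⟩)
      else some (i, j)

/-!
Every transition either fixes a state or moves it strictly to the right, counting the sink
`q_f` as the last column; hence every cycle is a self-loop. Since `q_f` is a sink, a word
synchronizes exactly when it sends every state to `q_f`. The leading `a` sends every state
outside the first column to `q_f` and fixes the first column. A word over `{b, c}` is read as
an assignment, `c` standing for `true`: from `q_{i,1}` it falls into `q_f` exactly when the letter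
read in some column `j` makes true the literal of `x_j` in `c_i`, that is, when it satisfies `c_i`.
-/

section DeltaStar

variable {Q A : Type*} (δ : Q → A → Q)

@[simp] lemma deltaStar_nil (q : Q) : deltaStar δ q [] = q := rfl

@[simp] lemma deltaStar_cons (q : Q) (x : A) (u : List A) :
    deltaStar δ q (x :: u) = deltaStar δ (δ q x) u := rfl

lemma deltaStar_of_isSink {s : Q} (hs : ∀ x, δ s x = s) (u : List A) :
    deltaStar δ s u = s := by
  induction u with
  | nil => rfl
  | cons x u ih => rw [deltaStar_cons, hs, ih]

lemma exists_forall_deltaStar_eq_iff_of_isSink {s : Q} (hs : ∀ x, δ s x = s) (u : List A) :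
    (∃ q, ∀ p, deltaStar δ p u = q) ↔ ∀ p, deltaStar δ p u = s := by
  refine ⟨fun ⟨q, hq⟩ p => ?_, fun h => ⟨s, h⟩⟩
  rw [hq, ← hq s, deltaStar_of_isSink δ hs]

lemma le_rank_deltaStar {r : Q → ℕ} (hr : ∀ q x, δ q x = q ∨ r q < r (δ q x))
    (q : Q) (u : List A) : r q ≤ r (deltaStar δ q u) := by
  induction u generalizing q with
  | nil => rfl
  | cons x u ih =>
    rcases hr q x with h | h
    · simpa [h] using ih q
    · exact h.le.trans (ih _)

theorem weaklyAcyclic_of_rank {r : Q → ℕ} (hr : ∀ q x, δ q x = q ∨ r q < r (δ q x)) :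
    WeaklyAcyclic δ := by
  rintro q u - hu
  induction u with
  | nil => simp
  | cons y u ih =>
    have hy : δ q y = q := (hr q y).resolve_right fun h =>
      (h.trans_le (le_rank_deltaStar δ hr _ u)).ne' (by rw [← deltaStar_cons, hu])
    rw [deltaStar_cons, hy] at hu
    simpa [hy] using ih hu

end DeltaStar

/-- The letter setting a variable to the given value: `c` (true) kills the states of the clauses
containing the variable positively, `b` (false) those containing it negatively. -/
def ABC.ofBool : Bool → ABC
  | false => ABC.b
  | true => ABC.c

lemma ABC.mem_range_ofBool {x : ABC} : x ∈ Set.range ABC.ofBool ↔ x = ABC.b ∨ x = ABC.c := by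
  cases x <;> simp [ABC.ofBool]

lemma ABC.exists_map_ofBool_eq_iff {v : List ABC} :
    (∃ w : List Bool, w.map ABC.ofBool = v) ↔ ∀ x ∈ v, x = ABC.b ∨ x = ABC.c := by
  rw [← Set.mem_range, Set.range_list_map, Set.mem_ofPred_eq]
  simp only [ABC.mem_range_ofBool]

lemma exists_list_satisfies_iff {ι : Type*} {n : ℕ} (C : ι → Fin n → Option Bool) :
    (∃ w : List Bool, ∀ i, ∃ k : Fin n, ∃ x, w[k.val]? = some x ∧ C i k = some x) ↔
      ∃ β : Fin n → Bool, ∀ i, ∃ k, C i k = some (β k) := by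
  constructor
  · rintro ⟨w, hw⟩
    refine ⟨fun k => w.getD k false, fun i => ?_⟩
    obtain ⟨k, x, hx, hC⟩ := hw i
    exact ⟨k, by simp [List.getD_eq_getElem?_getD, hx, hC]⟩
  · rintro ⟨β, hβ⟩
    refine ⟨List.ofFn β, fun i => ?_⟩
    obtain ⟨k, hk⟩ := hβ i
    exact ⟨k, β k, by simp, hk⟩

section SatDelta

variable {m n : ℕ} (C : Fin m → Fin n → Option Bool)

@[simp] lemma satDelta_none (x : ABC) : satDelta C none x = none := by
  cases x <;> rfl

def satRank : Option (Fin m × Fin (n + 1)) → ℕ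
  | none => n + 1
  | some (_, j) => j

lemma satDelta_eq_self_or_satRank_lt (q : Option (Fin m × Fin (n + 1))) (x : ABC) :
    satDelta C q x = q ∨ satRank q < satRank (satDelta C q x) := by
  rcases q with _ | ⟨i, j⟩
  · simp
  · have := j.isLt
    cases x <;> simp only [satDelta] <;> split_ifs <;> simp [satRank] <;> omega

lemma satDelta_a_zero (i : Fin m) : satDelta C (some (i, 0)) ABC.a = some (i, 0) := rfl

lemma satDelta_a_of_ne_zero (i : Fin m) {j : Fin (n + 1)} (hj : j ≠ 0) :
    satDelta C (some (i, j)) ABC.a = none := by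
  simp [satDelta, Fin.val_eq_zero_iff, hj]

lemma satDelta_ofBool_last (i : Fin m) (x : Bool) :
    satDelta C (some (i, Fin.last n)) (ABC.ofBool x) = some (i, Fin.last n) := by
  cases x <;> simp [satDelta, ABC.ofBool]

lemma satDelta_ofBool_castSucc (i : Fin m) (k : Fin n) (x : Bool) :
    satDelta C (some (i, k.castSucc)) (ABC.ofBool x) =
      if C i k = some x then none else some (i, k.succ) := by
  cases x <;> simp [satDelta, ABC.ofBool] <;> rfl

/-- The letter `w[t]` is read in column `j + t`. -/
lemma deltaStar_map_ofBool_eq_none_iff (i : Fin m) (j : Fin (n + 1)) (w : List Bool) :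
    deltaStar (satDelta C) (some (i, j)) (w.map ABC.ofBool) = none ↔
      ∃ k : Fin n, j.val ≤ k.val ∧ ∃ x, w[k.val - j.val]? = some x ∧ C i k = some x := by
  induction w generalizing j with
  | nil => simp
  | cons x w ih =>
    induction j using Fin.lastCases with
    | last =>
      rw [List.map_cons, deltaStar_cons, satDelta_ofBool_last, ih, Fin.val_last]
      constructor <;> rintro ⟨k, hk, -⟩ <;> exact absurd k.isLt (by omega)
    | cast k₀ =>
      rw [List.map_cons, deltaStar_cons, satDelta_ofBool_castSucc]
      split_ifs with hC
      · exact iff_of_true (deltaStar_of_isSink _ (satDelta_none C) _)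
          ⟨k₀, le_rfl, x, by simp, hC⟩
      rw [ih, Fin.val_succ, Fin.val_castSucc]
      constructor
      · rintro ⟨k, hk, y, hy, hCy⟩
        refine ⟨k, by omega, y, ?_, hCy⟩
        rwa [show k.val - k₀ = k - (k₀ + 1) + 1 by omega, List.getElem?_cons_succ]
      · rintro ⟨k, hk, y, hy, hCy⟩
        obtain rfl | hlt := (Fin.le_iff_val_le_val.mpr hk).eq_or_lt
        · simp only [Nat.sub_self, List.getElem?_cons_zero, Option.some_inj] at hy
          exact absurd (hy ▸ hCy) hC
        refine ⟨k, hlt, y, ?_, hCy⟩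
        rwa [show k.val - k₀ = k - (k₀ + 1) + 1 by omega, List.getElem?_cons_succ] at hy

lemma satDelta_synchronizes_a_cons_map_ofBool_iff (w : List Bool) :
    (∃ q, ∀ p, deltaStar (satDelta C) p (ABC.a :: w.map ABC.ofBool) = q) ↔
      ∀ i, ∃ k : Fin n, ∃ x, w[k.val]? = some x ∧ C i k = some x := by
  rw [exists_forall_deltaStar_eq_iff_of_isSink _ (satDelta_none C)]
  constructor
  · intro h i
    simpa [satDelta_a_zero, deltaStar_map_ofBool_eq_none_iff] using h (some (i, 0))
  · rintro h (_ | ⟨i, j⟩)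
    · exact deltaStar_of_isSink _ (satDelta_none C) _
    by_cases hj : j = 0
    · subst hj
      simpa [satDelta_a_zero, deltaStar_map_ofBool_eq_none_iff] using h i
    · rw [deltaStar_cons, satDelta_a_of_ne_zero C i hj]
      exact deltaStar_of_isSink _ (satDelta_none C) _

end SatDelta

/-- The SAT reduction automaton is weakly acyclic, and it has a synchronizing
word in the language `a(b+c)*` iff the clause set encoded by `C` is
satisfiable (an assignment `β` satisfies clause `c_i` iff some literal of
`c_i` is made true, i.e., `∃ j, C i j = some (β j)`). -/
theorem sat_reduction_a_bcStar {m n : ℕ} (C : Fin m → Fin n → Option Bool) :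
    WeaklyAcyclic (satDelta C) ∧
    ((∃ v : List ABC, (∀ x ∈ v, x = ABC.b ∨ x = ABC.c) ∧
        ∃ q : Option (Fin m × Fin (n + 1)),
          ∀ p : Option (Fin m × Fin (n + 1)),
            deltaStar (satDelta C) p (ABC.a :: v) = q) ↔
      ∃ β : Fin n → Bool, ∀ i : Fin m, ∃ j : Fin n, C i j = some (β j)) := by
  refine ⟨weaklyAcyclic_of_rank _ (satDelta_eq_self_or_satRank_lt C), ?_⟩
  rw [← exists_list_satisfies_iff]
  simp_rw [← satDelta_synchronizes_a_cons_map_ofBool_iff, ← ABC.exists_map_ofBool_eq_iff]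
  constructor
  · rintro ⟨_, ⟨w, rfl⟩, hsync⟩
    exact ⟨w, hsync⟩
  · rintro ⟨w, hsync⟩
    exact ⟨_, ⟨w, rfl⟩, hsync⟩
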